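/- arXiv:1303.3115 — 2 statements merged into one kernel-verified Lean document; each statement's English description precedes it below -/
import Mathlib

section
/- Let V > 0, r = √(V/π), and let μ be a measure on [0, π/2] × [0, ∞) (coordinates (α, ℓ)) such that the pushforward of μ under the projection (α, ℓ) ↦ α equals twice the Lebesgue measure on [0, π/2], and such that ∫ ℓ²/2 dμ(α, ℓ) ≤ V. Then equality ∫ ℓ·cos(α) dμ(α, ℓ) = √(πV) holds if and only if ∫ ℓ²/2 dμ = V and μ is concentrated on the set {(α, ℓ) : ℓ = 2r·cos(α)}. -/
/-!
Completing the square, `ℓ c = ℓ²/(4r) + r c² - (ℓ - 2rc)²/(4r)`, and integrating against `μ`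
gives `∫ ℓ cos α = (1/2r) ∫ ℓ²/2 + r ∫ cos² α - ∫ (ℓ - 2r cos α)²/(4r)`. The marginal condition
makes `∫ cos² α dμ = π/2`, and with `r = √(V/π)` and `∫ ℓ²/2 ≤ V` the first two terms add up
to at most `πr = √(πV)`. Equality therefore forces both `∫ ℓ²/2 = V` and the vanishing of the
square term, i.e. `ℓ = 2r cos α` almost everywhere.
-/

open Real MeasureTheory ENNReal

lemma mul_add_sq_sub_div_eq {r : ℝ} (hr : r ≠ 0) (ℓ c : ℝ) :
    ℓ * c + (ℓ - 2 * r * c) ^ 2 / (4 * r) = 1 / (2 * r) * (ℓ ^ 2 / 2) + r * c ^ 2 := by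
  field_simp
  ring

namespace ENNReal

lemma eq_iff_of_add_eq_mul_add_of_le {a b c d k t w : ℝ≥0∞} (h : a + b = k * c + d)
    (hc : c ≤ w) (ht : k * w + d = t) (ht_top : t ≠ ∞) (hk : k ≠ 0) (hk_top : k ≠ ∞) :
    a = t ↔ c = w ∧ b = 0 := by
  constructor
  · rintro rfl
    have hb : b = 0 := by
      have : a + b ≤ a + 0 := by
        rw [add_zero, h, ← ht]
        gcongr
      exact le_zero_iff.1 ((ENNReal.add_le_add_iff_left ht_top).1 this)
    have hd_top : d ≠ ∞ := ne_top_of_le_ne_top ht_top (by rw [← ht]; exact le_add_self)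
    rw [hb, add_zero, ← ht, ENNReal.add_left_inj hd_top, ENNReal.mul_right_inj hk hk_top] at h
    exact ⟨h.symm, hb⟩
  · rintro ⟨rfl, rfl⟩
    rw [← ht, ← h, add_zero]

end ENNReal

section Integrals

variable {α : Type*} [MeasurableSpace α] (μ : Measure α)

lemma lintegral_ofReal_sq_sub_div_eq_zero_iff {f g : α → ℝ} (hf : Measurable f)
    (hg : Measurable g) {c : ℝ} (hc : 0 < c) :
    ∫⁻ x, ENNReal.ofReal ((f x - g x) ^ 2 / c) ∂μ = 0 ↔ μ {x | f x ≠ g x} = 0 := by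
  have hm : Measurable fun x => ENNReal.ofReal ((f x - g x) ^ 2 / c) := by fun_prop
  rw [lintegral_eq_zero_iff hm, Filter.EventuallyEq, ae_iff]
  simp only [Pi.zero_apply, ENNReal.ofReal_eq_zero, not_le, div_pos_iff_of_pos_right hc,
    sq_pos_iff, sub_ne_zero]

lemma lintegral_mul_add_lintegral_sq_sub_div {f g : α → ℝ} (hf : Measurable f)
    (hg : Measurable g) (hfg : ∀ᵐ x ∂μ, 0 ≤ f x ∧ 0 ≤ g x) {r : ℝ} (hr : 0 < r) :
    ∫⁻ x, ENNReal.ofReal (f x * g x) ∂μ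
        + ∫⁻ x, ENNReal.ofReal ((f x - 2 * r * g x) ^ 2 / (4 * r)) ∂μ
      = ENNReal.ofReal (1 / (2 * r)) * ∫⁻ x, ENNReal.ofReal (f x ^ 2 / 2) ∂μ
        + ENNReal.ofReal r * ∫⁻ x, ENNReal.ofReal (g x ^ 2) ∂μ := by
  have hfg_m : Measurable fun x => ENNReal.ofReal (f x * g x) := by fun_prop
  have hf2 : Measurable fun x => ENNReal.ofReal (f x ^ 2 / 2) := by fun_prop
  have hg2 : Measurable fun x => ENNReal.ofReal (g x ^ 2) := by fun_prop
  rw [← lintegral_add_left hfg_m, ← lintegral_const_mul _ hf2,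
    ← lintegral_const_mul _ hg2, ← lintegral_add_left (hf2.const_mul _)]
  refine lintegral_congr_ae ?_
  filter_upwards [hfg] with x ⟨hfx, hgx⟩
  rw [← ENNReal.ofReal_add (by positivity) (by positivity), ← ENNReal.ofReal_mul (by positivity),
    ← ENNReal.ofReal_mul hr.le, ← ENNReal.ofReal_add (by positivity) (by positivity),
    mul_add_sq_sub_div_eq hr.ne']

end Integrals

lemma lintegral_cos_sq_Icc_zero_pi_div_two :
    ∫⁻ a in Set.Icc 0 (π / 2), ENNReal.ofReal (cos a ^ 2) = ENNReal.ofReal (π / 4) := by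
  have hint : IntegrableOn (fun a => cos a ^ 2) (Set.Icc 0 (π / 2)) :=
    (continuous_cos.pow 2).continuousOn.integrableOn_compact isCompact_Icc
  rw [← ofReal_integral_eq_lintegral_ofReal hint (ae_of_all _ fun a => sq_nonneg _),
    integral_Icc_eq_integral_Ioc, ← intervalIntegral.integral_of_le (by positivity),
    integral_cos_sq]
  congr 1
  simp only [cos_pi_div_two, sin_zero]
  ring

/-- Equality case of the analytic core of the Little Prince theorem: under the same
hypotheses, equality `∫ ℓ·cos α dμ = √(πV)` holds iff `∫ ℓ²/2 dμ = V` and `μ` is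
concentrated on the set `{(α, ℓ) : ℓ = 2r·cos α}` where `r = √(V/π)`. -/
theorem littlePrince_equality (V : ℝ) (hV : 0 < V) (r : ℝ) (hr : r = Real.sqrt (V / π))
    (μ : Measure (ℝ × ℝ))
    (hsupp : μ ((Set.Icc 0 (π / 2) ×ˢ Set.Ici (0 : ℝ))ᶜ) = 0)
    (hmarg : μ.map Prod.fst = (2 : ℝ≥0∞) • volume.restrict (Set.Icc 0 (π / 2)))
    (harea : ∫⁻ x, ENNReal.ofReal (x.2 ^ 2 / 2) ∂μ ≤ ENNReal.ofReal V) :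
    ∫⁻ x, ENNReal.ofReal (x.2 * cos x.1) ∂μ = ENNReal.ofReal (Real.sqrt (π * V)) ↔
      (∫⁻ x, ENNReal.ofReal (x.2 ^ 2 / 2) ∂μ = ENNReal.ofReal V ∧
        μ {x : ℝ × ℝ | x.2 ≠ 2 * r * cos x.1} = 0) := by
  have hr_pos : 0 < r := hr ▸ Real.sqrt_pos.2 (div_pos hV pi_pos)
  have hV_eq : V = π * r ^ 2 := by
    rw [hr, sq_sqrt (div_pos hV pi_pos).le]
    field_simp
  have hsqrt : Real.sqrt (π * V) = π * r := by
    rw [hV_eq, show π * (π * r ^ 2) = (π * r) ^ 2 by ring, sqrt_sq (by positivity)]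
  have hcos : Measurable fun x : ℝ × ℝ => cos x.1 := continuous_cos.measurable.comp measurable_fst
  have hcos_sq : ∫⁻ x, ENNReal.ofReal (cos x.1 ^ 2) ∂μ = ENNReal.ofReal (π / 2) := by
    rw [← lintegral_map (continuous_cos.measurable.pow_const 2).ennreal_ofReal measurable_fst,
      hmarg, lintegral_smul_measure, lintegral_cos_sq_Icc_zero_pi_div_two, smul_eq_mul,
      ← ENNReal.ofReal_ofNat, ← ENNReal.ofReal_mul zero_le_two]
    ring_nf
  have hnonneg : ∀ᵐ x ∂μ, 0 ≤ x.2 ∧ 0 ≤ cos x.1 := by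
    filter_upwards [mem_ae_iff.2 hsupp] with x ⟨⟨h0, hπ⟩, hℓ⟩
    exact ⟨hℓ, cos_nonneg_of_mem_Icc ⟨by linarith [pi_pos], hπ⟩⟩
  rw [← lintegral_ofReal_sq_sub_div_eq_zero_iff μ measurable_snd (hcos.const_mul (2 * r))
    (by positivity : (0 : ℝ) < 4 * r)]
  refine ENNReal.eq_iff_of_add_eq_mul_add_of_le
    (lintegral_mul_add_lintegral_sq_sub_div μ measurable_snd hcos hnonneg hr_pos) harea ?_
    ofReal_ne_top (by simpa using hr_pos) ofReal_ne_top
  rw [hcos_sq, ← ENNReal.ofReal_mul (by positivity), ← ENNReal.ofReal_mul hr_pos.le,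
    ← ENNReal.ofReal_add (by positivity) (by positivity), hsqrt, hV_eq]
  congr 1
  field_simp
  ring
end

section
/- Let r ∈ (0, π/2) and α, β ∈ [0, π/2). Define g(ℓ) = 2·tan(r)·ℓ − ((1 − cos(ℓ))/2)·(1/cos(α) + 1/cos(β)) − tan(r)·(ℓ − sin(ℓ)) for ℓ ∈ [0, π], and g(ℓ) = g(π) for ℓ > π. Then g attains its maximum on [0, ∞) exactly at ℓ* = 2·arctan(2·tan(r)/(1/cos(α) + 1/cos(β))); that is, g(ℓ) < g(ℓ*) for every ℓ ≥ 0 with ℓ ≠ ℓ*. -/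
/-!
Writing `S = 1/cos α + 1/cos β > 0` and `c = 2 tan r / S`, on `[0, π]` the function is
`(S/2)·(c(ℓ + sin ℓ) − (1 − cos ℓ))`. The derivative of the bracket is
`c(1 + cos ℓ) − sin ℓ = 2 cos²(ℓ/2)·(c − tan(ℓ/2))`, whose sign on `(−π, π)` is that of
`ℓ* − ℓ` with `ℓ* = 2 arctan c`, because `tan` is increasing on `(−π/2, π/2)`. Hence the bracket
increases strictly up to `ℓ*` and decreases strictly after it; past `π` the function is frozen at a
value below the maximum since `ℓ* < π`.
-/

open Real

/-- The dual test function for the `κ = +1`, `n = 2` isoperimetric problem: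
`g(ℓ) = 2·tan r·ℓ − ((1 − cos ℓ)/2)·(1/cos α + 1/cos β) − tan r·(ℓ − sin ℓ)` for
`ℓ ∈ [0, π]`, constant equal to `g(π)` afterwards. -/
noncomputable def sphG2 (r α β ℓ : ℝ) : ℝ :=
  if ℓ ≤ π then
    2 * tan r * ℓ - ((1 - cos ℓ) / 2) * (1 / cos α + 1 / cos β) - tan r * (ℓ - sin ℓ)
  else
    2 * tan r * π - ((1 - cos π) / 2) * (1 / cos α + 1 / cos β) - tan r * (π - sin π)

open Set

noncomputable def sphProfile (c x : ℝ) : ℝ :=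
  c * (x + sin x) - (1 - cos x)

lemma mul_one_add_cos_two_mul_sub_sin_two_mul (c : ℝ) {θ : ℝ} (hθ : cos θ ≠ 0) :
    c * (1 + cos (2 * θ)) - sin (2 * θ) = 2 * cos θ ^ 2 * (c - tan θ) := by
  rw [cos_two_mul, sin_two_mul, tan_eq_sin_div_cos]
  field_simp
  ring

lemma hasDerivAt_sphProfile (c x : ℝ) :
    HasDerivAt (sphProfile c) (c * (1 + cos x) - sin x) x := by
  have h := (((hasDerivAt_id' x).add (hasDerivAt_sin x)).const_mul c).sub
    ((hasDerivAt_cos x).const_sub 1)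
  rw [neg_neg] at h
  exact h

lemma continuous_sphProfile (c : ℝ) : Continuous (sphProfile c) := by
  unfold sphProfile
  fun_prop

lemma deriv_sphProfile_two_mul (c : ℝ) {θ : ℝ} (hθ : θ ∈ Ioo (-(π / 2)) (π / 2)) :
    deriv (sphProfile c) (2 * θ) = 2 * cos θ ^ 2 * (c - tan θ) := by
  rw [(hasDerivAt_sphProfile c _).deriv]
  exact mul_one_add_cos_two_mul_sub_sin_two_mul c (cos_pos_of_mem_Ioo hθ).ne'

lemma two_mul_arctan_mem_Ioo (c : ℝ) : 2 * arctan c ∈ Ioo (-π) π :=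
  ⟨by linarith [neg_pi_div_two_lt_arctan c], by linarith [arctan_lt_pi_div_two c]⟩

lemma sphProfile_strictMonoOn (c : ℝ) :
    StrictMonoOn (sphProfile c) (Icc (-π) (2 * arctan c)) := by
  refine strictMonoOn_of_deriv_pos (convex_Icc _ _) (continuous_sphProfile c).continuousOn ?_
  rw [interior_Icc]
  rintro x ⟨hπx, hxL⟩
  have hLπ := (two_mul_arctan_mem_Ioo c).2
  have hθ : x / 2 ∈ Ioo (-(π / 2)) (π / 2) := ⟨by linarith, by linarith⟩
  have htan : tan (x / 2) < c := by
    simpa only [tan_arctan] using tan_lt_tan_of_lt_of_lt_pi_div_two hθ.1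
      (arctan_lt_pi_div_two c) (by linarith : x / 2 < arctan c)
  rw [← mul_div_cancel₀ x two_ne_zero, deriv_sphProfile_two_mul c hθ]
  have := cos_pos_of_mem_Ioo hθ
  have : 0 < c - tan (x / 2) := sub_pos.2 htan
  positivity

lemma sphProfile_strictAntiOn (c : ℝ) :
    StrictAntiOn (sphProfile c) (Icc (2 * arctan c) π) := by
  refine strictAntiOn_of_deriv_neg (convex_Icc _ _) (continuous_sphProfile c).continuousOn ?_
  rw [interior_Icc]
  rintro x ⟨hLx, hxπ⟩
  have hπL := (two_mul_arctan_mem_Ioo c).1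
  have hθ : x / 2 ∈ Ioo (-(π / 2)) (π / 2) := ⟨by linarith, by linarith⟩
  have htan : c < tan (x / 2) := by
    simpa only [tan_arctan] using tan_lt_tan_of_lt_of_lt_pi_div_two
      (neg_pi_div_two_lt_arctan c) hθ.2 (by linarith : arctan c < x / 2)
  rw [← mul_div_cancel₀ x two_ne_zero, deriv_sphProfile_two_mul c hθ]
  have := cos_pos_of_mem_Ioo hθ
  exact mul_neg_of_pos_of_neg (by positivity) (sub_neg.2 htan)

lemma sphProfile_lt_of_ne (c : ℝ) {x : ℝ} (hx : x ∈ Icc (-π) π) (hne : x ≠ 2 * arctan c) :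
    sphProfile c x < sphProfile c (2 * arctan c) := by
  obtain ⟨hπL, hLπ⟩ := two_mul_arctan_mem_Ioo c
  rcases hne.lt_or_gt with hlt | hgt
  · exact sphProfile_strictMonoOn c ⟨hx.1, hlt.le⟩ ⟨hπL.le, le_rfl⟩ hlt
  · exact sphProfile_strictAntiOn c ⟨le_rfl, hLπ.le⟩ ⟨hgt.le, hx.2⟩ hgt

lemma sphG2_eq_mul_sphProfile (r α β ℓ : ℝ) (hS : 1 / cos α + 1 / cos β ≠ 0) :
    sphG2 r α β ℓ = (1 / cos α + 1 / cos β) / 2 *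
      sphProfile (2 * tan r / (1 / cos α + 1 / cos β)) (min ℓ π) := by
  unfold sphG2 sphProfile
  split_ifs with h
  · rw [min_eq_left h]; field_simp; ring
  · rw [min_eq_right (not_le.1 h).le]; field_simp; ring

theorem sphG2_lt_of_ne_general (r α β : ℝ)
    (hα : α ∈ Set.Ico 0 (π / 2)) (hβ : β ∈ Set.Ico 0 (π / 2)) :
    ∀ ℓ : ℝ, 0 ≤ ℓ → ℓ ≠ 2 * arctan (2 * tan r / (1 / cos α + 1 / cos β)) →
      sphG2 r α β ℓ < sphG2 r α β (2 * arctan (2 * tan r / (1 / cos α + 1 / cos β))) := by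
  intro ℓ hℓ hne
  set S := 1 / cos α + 1 / cos β
  set L := 2 * arctan (2 * tan r / S)
  have hS : 0 < S := by
    have := cos_pos_of_mem_Ioo ⟨by linarith [hα.1, pi_pos], hα.2⟩
    have := cos_pos_of_mem_Ioo ⟨by linarith [hβ.1, pi_pos], hβ.2⟩
    positivity
  have hLπ : L < π := (two_mul_arctan_mem_Ioo _).2
  have hmin_ne : min ℓ π ≠ L := by
    rcases le_total ℓ π with h | h
    · rwa [min_eq_left h]
    · rw [min_eq_right h]; exact hLπ.ne'
  rw [sphG2_eq_mul_sphProfile r α β ℓ hS.ne', sphG2_eq_mul_sphProfile r α β L hS.ne',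
    min_eq_left hLπ.le]
  have hmin_mem : min ℓ π ∈ Icc (-π) π :=
    ⟨le_min (by linarith [pi_pos]) (by linarith [pi_pos]), min_le_right ℓ π⟩
  exact mul_lt_mul_of_pos_left (sphProfile_lt_of_ne _ hmin_mem hmin_ne) (by positivity)

/-- `g` attains its maximum on `[0, ∞)` exactly at
`ℓ* = 2·arctan (2·tan r / (1/cos α + 1/cos β))`. -/
theorem sphG2_lt_of_ne (r α β : ℝ) (hr : r ∈ Set.Ioo 0 (π / 2))
    (hα : α ∈ Set.Ico 0 (π / 2)) (hβ : β ∈ Set.Ico 0 (π / 2)) :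
    ∀ ℓ : ℝ, 0 ≤ ℓ → ℓ ≠ 2 * arctan (2 * tan r / (1 / cos α + 1 / cos β)) →
      sphG2 r α β ℓ < sphG2 r α β (2 * arctan (2 * tan r / (1 / cos α + 1 / cos β))) :=
  sphG2_lt_of_ne_general r α β hα hβ
end
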